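/- Let n ≥ 1, 1 < p < ∞, 1 < q < ∞, γ₁, γ₂ ∈ ℝ, and let p₁ ≥ 1, w ≥ 0 and q₁ ≥ 1 be reals such that either (w = 0 and q₁ = 1) or (w > 0 and 1 ≤ q₁ ≤ q). Then there is a constant C > 0 such that every family a = (a^ε_{j,k})_{ε∈E_n, j∈ℤ, k∈ℤ^n} of complex numbers satisfies M^{γ₁−w, γ₂}_{p/p₁, q/q₁}(a) ≤ C · M^{γ₁, γ₂+w}_{p,q}(a) as values in [0,∞]. -/

import Mathlib

noncomputable section

open MeasureTheory Real Complex
open scoped ENNReal NNReal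

/-- `ℝⁿ` modeled as functions `Fin n → ℝ`. -/
abbrev Vec (n : ℕ) : Type := Fin n → ℝ

/-- Integer lattice `ℤⁿ`. -/
abbrev IVec (n : ℕ) : Type := Fin n → ℤ

/-- The index set `E_n = {0,1}ⁿ \ {0}`, with `{0,1}ⁿ` modeled as `Fin n → Bool`. -/
abbrev En (n : ℕ) : Type := {ε : Fin n → Bool // ε ≠ fun _ => false}

/-- The Euclidean norm on `Vec n`. -/
def enorm2 {n : ℕ} (x : Vec n) : ℝ := Real.sqrt (∑ i, (x i) ^ 2)

/-- The dyadic cube `Q_{j,k} = {x : 2^j x − k ∈ [0,1)ⁿ}` of side length `2^{−j}`. -/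
def dyadicCube (n : ℕ) (j : ℤ) (k : IVec n) : Set (Vec n) :=
  {x | ∀ i, (k i : ℝ) ≤ (2:ℝ) ^ j * x i ∧ (2:ℝ) ^ j * x i < (k i : ℝ) + 1}

/-- The Besov-Q quantity `M^{γ₁,γ₂}_{p,q}(a)`. -/
def besovM (n : ℕ) (p q γ₁ γ₂ : ℝ) (a : En n → ℤ → IVec n → ℂ) : ℝ≥0∞ :=
  ⨆ (j₀ : ℤ) (k₀ : IVec n),
    ENNReal.ofReal ((2:ℝ) ^ (-(j₀:ℝ) * (γ₂ - n / p))) *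
    (∑' j : {j : ℤ // j₀ ≤ j},
        ENNReal.ofReal ((2:ℝ) ^ (((j:ℤ):ℝ) * q * (γ₁ + n / 2 - n / p))) *
          (∑' (ε : En n) (k : {k : IVec n // dyadicCube n (j:ℤ) k ⊆ dyadicCube n j₀ k₀}),
              ENNReal.ofReal (‖a ε (j:ℤ) (k : IVec n)‖ ^ p)) ^ (q / p)) ^ (1 / q)

/-!
Fix a dyadic cube `Q = Q_{j₀,k₀}`. At level `j ≥ j₀` at most `2^{n(j-j₀+1)}` pairs `(ε, k)`
have `Q_{j,k} ⊆ Q`, so Hölder on this finite family bounds the `ℓ^{p/p₁}` sum by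
`2^{n(j-j₀+1)(1-1/p₁)}` times the `p₁`-th root of the `ℓ^p` sum; the growth in `j` is exactly
compensated by the change of `n/p` into `n p₁/p` in the level weights, and the `j₀`-part is
compensated by the cube weight. What remains at level `j` is an extra factor
`2^{-j w q/q₁}`. For `q₁ = 1` it is at most `2^{-j₀ w q}`; for `q₁ > 1`, Hölder with exponent
`q₁` against the geometric series `∑_{j ≥ j₀} 2^{-j w q s/q₁}` (`s` the conjugate exponent)
bounds the sum over `j` by a constant times `2^{-j₀ w q/q₁}`, which raises `γ₂` to `γ₂ + w`.
-/

namespace ENNReal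

lemma tsum_mul_le_tsum_rpow_mul_tsum_rpow {ι : Type*} {p q : ℝ} (hpq : p.HolderConjugate q)
    (f g : ι → ℝ≥0∞) :
    ∑' i, f i * g i ≤ (∑' i, f i ^ p) ^ (1 / p) * (∑' i, g i ^ q) ^ (1 / q) := by
  let _ : MeasurableSpace ι := ⊤
  simpa [lintegral_count] using
    lintegral_mul_le_Lp_mul_Lq (Measure.count : Measure ι) hpq measurable_from_top.aemeasurable
      measurable_from_top.aemeasurable

lemma tsum_le_natCard_rpow_mul_tsum_rpow {ι : Type*} [Finite ι] {p : ℝ} (hp : 1 ≤ p)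
    (g : ι → ℝ≥0∞) :
    ∑' i, g i ≤ (Nat.card ι : ℝ≥0∞) ^ (1 - p⁻¹) * (∑' i, g i ^ p) ^ p⁻¹ := by
  have := Fintype.ofFinite ι
  simpa [tsum_fintype, Nat.card_eq_fintype_card] using
    inner_le_weight_mul_Lp_of_nonneg Finset.univ hp 1 g

lemma two_rpow_add (x y : ℝ) : (2 : ℝ≥0∞) ^ (x + y) = 2 ^ x * 2 ^ y :=
  rpow_add _ _ two_ne_zero ofNat_ne_top

end ENNReal

def natEquivIntGE (j₀ : ℤ) : ℕ ≃ {j : ℤ // j₀ ≤ j} where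
  toFun m := ⟨j₀ + m, by omega⟩
  invFun j := (j.1 - j₀).toNat
  left_inv m := by simp
  right_inv j := by ext; simp; omega

lemma tsum_two_rpow_neg_mul (j₀ : ℤ) (c : ℝ) :
    ∑' j : {j : ℤ // j₀ ≤ j}, (2 : ℝ≥0∞) ^ (-((j : ℤ) : ℝ) * c) =
      2 ^ (-(j₀ : ℝ) * c) * (1 - 2 ^ (-c))⁻¹ := by
  rw [← (natEquivIntGE j₀).tsum_eq, ← ENNReal.tsum_geometric, ← ENNReal.tsum_mul_left]
  refine tsum_congr fun m => ?_
  simp only [natEquivIntGE, Equiv.coe_fn_mk, Int.cast_add, Int.cast_natCast, ← ENNReal.rpow_natCast,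
    ← ENNReal.rpow_mul, ← ENNReal.two_rpow_add]
  ring_nf

lemma tsum_two_rpow_neg_mul_mul_le (j₀ : ℤ) {c : ℝ} (hc : 0 ≤ c)
    (b : {j : ℤ // j₀ ≤ j} → ℝ≥0∞) :
    ∑' j : {j : ℤ // j₀ ≤ j}, (2 : ℝ≥0∞) ^ (-((j : ℤ) : ℝ) * c) * b j ≤
      2 ^ (-(j₀ : ℝ) * c) * ∑' j, b j := by
  rw [← ENNReal.tsum_mul_left]
  refine ENNReal.tsum_le_tsum fun j => mul_le_mul_left (ENNReal.rpow_le_rpow_of_exponent_le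
    one_le_two ?_) _
  have : (j₀ : ℝ) ≤ (j : ℤ) := by exact_mod_cast j.2
  nlinarith

lemma tsum_two_rpow_neg_mul_mul_rpow_le (j₀ : ℤ) (c : ℝ) {q : ℝ} (hq : 1 < q)
    (b : {j : ℤ // j₀ ≤ j} → ℝ≥0∞) :
    ∑' j : {j : ℤ // j₀ ≤ j}, (2 : ℝ≥0∞) ^ (-((j : ℤ) : ℝ) * c) * b j ^ q⁻¹ ≤
      (1 - 2 ^ (-(c * q.conjExponent)))⁻¹ ^ q.conjExponent⁻¹ *
        (2 ^ (-(j₀ : ℝ) * c) * (∑' j, b j) ^ q⁻¹) := by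
  set s := q.conjExponent
  have hs : s.HolderConjugate q := (Real.HolderConjugate.conjExponent hq).symm
  calc _ ≤ (∑' j : {j : ℤ // j₀ ≤ j}, ((2 : ℝ≥0∞) ^ (-((j : ℤ) : ℝ) * c)) ^ s) ^ (1 / s) *
        (∑' j, (b j ^ q⁻¹) ^ q) ^ (1 / q) := ENNReal.tsum_mul_le_tsum_rpow_mul_tsum_rpow hs _ _
    _ = _ := by
      simp only [← ENNReal.rpow_mul, inv_mul_cancel₀ hs.symm.ne_zero, ENNReal.rpow_one,
        mul_assoc, tsum_two_rpow_neg_mul]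
      rw [ENNReal.mul_rpow_of_nonneg _ _ (one_div_nonneg.2 hs.nonneg), ← ENNReal.rpow_mul,
        show -(j₀ : ℝ) * (c * s) * (1 / s) = -j₀ * c by field_simp [hs.ne_zero], one_div, one_div]
      ring

lemma exists_tsum_two_rpow_neg_mul_mul_rpow_le {c q : ℝ}
    (h : (c = 0 ∧ q = 1) ∨ (0 < c ∧ 1 ≤ q)) :
    ∃ G : ℝ≥0∞, G ≠ ⊤ ∧ ∀ (j₀ : ℤ) (b : {j : ℤ // j₀ ≤ j} → ℝ≥0∞),
      ∑' j : {j : ℤ // j₀ ≤ j}, (2 : ℝ≥0∞) ^ (-((j : ℤ) : ℝ) * c) * b j ^ q⁻¹ ≤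
        G * (2 ^ (-(j₀ : ℝ) * c) * (∑' j, b j) ^ q⁻¹) := by
  obtain ⟨hc, hq⟩ : 0 ≤ c ∧ (q = 1 ∨ (0 < c ∧ 1 < q)) := by
    rcases h with ⟨rfl, rfl⟩ | ⟨hc, hq⟩
    · exact ⟨le_rfl, .inl rfl⟩
    · exact ⟨hc.le, hq.eq_or_lt.imp Eq.symm (⟨hc, ·⟩)⟩
  rcases hq with rfl | ⟨hc, hq⟩
  · refine ⟨1, ENNReal.one_ne_top, fun j₀ b => ?_⟩
    simpa using tsum_two_rpow_neg_mul_mul_le j₀ hc b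
  · refine ⟨_, ?_, fun j₀ b => tsum_two_rpow_neg_mul_mul_rpow_le j₀ c hq b⟩
    have hs : 0 < q.conjExponent := (Real.HolderConjugate.conjExponent hq).symm.pos
    have hlt : (2 : ℝ≥0∞) ^ (-(c * q.conjExponent)) < 1 :=
      ENNReal.rpow_lt_one_of_one_lt_of_neg (by norm_num) (by nlinarith)
    exact ENNReal.rpow_ne_top_of_nonneg (by positivity)
      (ENNReal.inv_ne_top.2 (tsub_pos_iff_lt.2 hlt).ne')

lemma mem_Ico_of_dyadicCube_subset {n : ℕ} {j₀ : ℤ} {m : ℕ} {k k₀ : IVec n}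
    (h : dyadicCube n (j₀ + m) k ⊆ dyadicCube n j₀ k₀) (i : Fin n) :
    k i ∈ Finset.Ico (k₀ i * 2 ^ m) ((k₀ i + 1) * 2 ^ m) := by
  have corner : (fun i => (k i : ℝ) / 2 ^ (j₀ + m)) ∈ dyadicCube n (j₀ + m) k := fun i => by
    rw [mul_div_cancel₀ (k i : ℝ) (zpow_ne_zero _ two_ne_zero)]
    simp
  have scale : (2 : ℝ) ^ j₀ * ((k i : ℝ) / 2 ^ (j₀ + m)) = k i / 2 ^ m := by
    rw [zpow_add₀ two_ne_zero, zpow_natCast]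
    field_simp
  have := h corner i
  rw [scale, le_div_iff₀ (by positivity), div_lt_iff₀ (by positivity)] at this
  rw [Finset.mem_Ico]
  exact_mod_cast this

lemma setOf_dyadicCube_subset_subset_piFinset (n : ℕ) (j₀ : ℤ) (m : ℕ) (k₀ : IVec n) :
    {k | dyadicCube n (j₀ + m) k ⊆ dyadicCube n j₀ k₀} ⊆
      Fintype.piFinset fun i => Finset.Ico (k₀ i * 2 ^ m) ((k₀ i + 1) * 2 ^ m) :=
  fun _ hk => Fintype.mem_piFinset.2 (mem_Ico_of_dyadicCube_subset hk)

lemma finite_setOf_dyadicCube_subset (n : ℕ) (j₀ : ℤ) (m : ℕ) (k₀ : IVec n) :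
    {k | dyadicCube n (j₀ + m) k ⊆ dyadicCube n j₀ k₀}.Finite :=
  (Finset.finite_toSet _).subset (setOf_dyadicCube_subset_subset_piFinset n j₀ m k₀)

lemma ncard_setOf_dyadicCube_subset_le (n : ℕ) (j₀ : ℤ) (m : ℕ) (k₀ : IVec n) :
    {k | dyadicCube n (j₀ + m) k ⊆ dyadicCube n j₀ k₀}.ncard ≤ 2 ^ (m * n) := by
  refine (Set.ncard_le_ncard (setOf_dyadicCube_subset_subset_piFinset n j₀ m k₀)
    (Finset.finite_toSet _)).trans_eq ?_
  rw [Set.ncard_coe_finset, Fintype.card_piFinset]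
  simp [add_one_mul, pow_mul, Int.toNat_pow_of_nonneg]

lemma natCard_prod_setOf_dyadicCube_subset_le (n : ℕ) (j₀ : ℤ) (m : ℕ) (k₀ : IVec n) :
    Nat.card (En n × {k : IVec n // dyadicCube n (j₀ + m) k ⊆ dyadicCube n j₀ k₀}) ≤
      2 ^ (n * (m + 1)) := by
  have hE : Nat.card (En n) ≤ 2 ^ n := (Finite.card_subtype_le _).trans_eq (by simp)
  rw [Nat.card_prod, mul_add_one, pow_add, mul_comm (2 ^ _), mul_comm n m]
  exact Nat.mul_le_mul hE
    ((Nat.card_coe_set_eq _).trans_le (ncard_setOf_dyadicCube_subset_le n j₀ m k₀))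

def levelSum (n : ℕ) (p : ℝ) (a : En n → ℤ → IVec n → ℂ) (j₀ : ℤ) (k₀ : IVec n) (j : ℤ) :
    ℝ≥0∞ :=
  ∑' (ε : En n) (k : {k : IVec n // dyadicCube n j k ⊆ dyadicCube n j₀ k₀}),
    ENNReal.ofReal (‖a ε j k‖ ^ p)

lemma levelSum_div_le (n : ℕ) (a : En n → ℤ → IVec n → ℂ) (p : ℝ) {p₁ : ℝ} (hp₁ : 1 ≤ p₁)
    {j₀ : ℤ} (k₀ : IVec n) {j : ℤ} (hj : j₀ ≤ j) :
    levelSum n (p / p₁) a j₀ k₀ j ≤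
      2 ^ ((n : ℝ) * (j - j₀ + 1) * (1 - p₁⁻¹)) * levelSum n p a j₀ k₀ j ^ p₁⁻¹ := by
  obtain ⟨m, rfl⟩ := Int.le.dest hj
  have : Finite {k : IVec n // dyadicCube n (j₀ + m) k ⊆ dyadicCube n j₀ k₀} :=
    (finite_setOf_dyadicCube_subset n j₀ m k₀).to_subtype
  have hcard : (Nat.card (En n × {k : IVec n // dyadicCube n (j₀ + m) k ⊆ dyadicCube n j₀ k₀}) :
      ℝ≥0∞) ≤ 2 ^ ((n : ℝ) * ((j₀ + m : ℤ) - j₀ + 1)) := by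
    have : ((2 ^ (n * (m + 1)) : ℕ) : ℝ≥0∞) = 2 ^ ((n : ℝ) * ((j₀ + m : ℤ) - j₀ + 1)) := by
      rw [Nat.cast_pow, Nat.cast_ofNat, ← ENNReal.rpow_natCast]; push_cast; ring_nf
    exact this ▸ Nat.cast_le.2 (natCard_prod_setOf_dyadicCube_subset_le n j₀ m k₀)
  have hpow (x : ℂ) : ENNReal.ofReal (‖x‖ ^ (p / p₁)) ^ p₁ = ENNReal.ofReal (‖x‖ ^ p) := by
    rw [ENNReal.ofReal_rpow_of_nonneg (by positivity) (by linarith),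
      ← Real.rpow_mul (norm_nonneg _), div_mul_cancel₀ _ (by positivity)]
  simp only [levelSum, ← ENNReal.tsum_prod]
  calc _ ≤ _ := ENNReal.tsum_le_natCard_rpow_mul_tsum_rpow hp₁ _
    _ ≤ _ := by
      simp only [hpow]
      rw [ENNReal.rpow_mul 2 ((n : ℝ) * _)]
      gcongr
      linarith [inv_le_one_of_one_le₀ hp₁]

lemma two_rpow_mul_levelSum_div_rpow_le (n : ℕ) (a : En n → ℤ → IVec n → ℂ) {p q p₁ q₁ : ℝ}
    (γ₁ w : ℝ) (hp : 0 < p) (hq : 0 < q) (hp₁ : 1 ≤ p₁) (hq₁ : 0 < q₁) {j₀ : ℤ} (k₀ : IVec n)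
    {j : ℤ} (hj : j₀ ≤ j) :
    2 ^ ((j : ℝ) * (q / q₁) * (γ₁ - w + n / 2 - n / (p / p₁))) *
        levelSum n (p / p₁) a j₀ k₀ j ^ ((q / q₁) / (p / p₁)) ≤
      2 ^ ((1 - j₀) * n * (p₁ - 1) * q / (p * q₁)) *
        (2 ^ (-(j : ℝ) * (q / q₁ * w)) *
          (2 ^ ((j : ℝ) * q * (γ₁ + n / 2 - n / p)) * levelSum n p a j₀ k₀ j ^ (q / p)) ^
            q₁⁻¹) := by
  have hp₁' : 0 < p₁ := by linarith
  calc _ ≤ 2 ^ ((j : ℝ) * (q / q₁) * (γ₁ - w + n / 2 - n / (p / p₁))) *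
        (2 ^ ((n : ℝ) * (j - j₀ + 1) * (1 - p₁⁻¹)) * levelSum n p a j₀ k₀ j ^ p₁⁻¹) ^
          ((q / q₁) / (p / p₁)) := by
        gcongr
        exact levelSum_div_le n a p hp₁ k₀ hj
    _ = 2 ^ ((j : ℝ) * (q / q₁) * (γ₁ - w + n / 2 - n / (p / p₁)) +
          (n : ℝ) * (j - j₀ + 1) * (1 - p₁⁻¹) * ((q / q₁) / (p / p₁))) *
        levelSum n p a j₀ k₀ j ^ (p₁⁻¹ * ((q / q₁) / (p / p₁))) := by
        rw [ENNReal.mul_rpow_of_nonneg _ _ (by positivity), ← ENNReal.rpow_mul, ← ENNReal.rpow_mul,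
          ← mul_assoc, ENNReal.two_rpow_add]
    _ = _ := by
        rw [ENNReal.mul_rpow_of_nonneg _ _ (by positivity), ← ENNReal.rpow_mul, ← ENNReal.rpow_mul,
          ← mul_assoc, ← mul_assoc, ← ENNReal.two_rpow_add, ← ENNReal.two_rpow_add]
        congr 2
        · field_simp
          ring
        · field_simp

def cubeTerm (n : ℕ) (p q γ₁ γ₂ : ℝ) (a : En n → ℤ → IVec n → ℂ) (j₀ : ℤ) (k₀ : IVec n) :
    ℝ≥0∞ :=
  2 ^ (-(j₀ : ℝ) * (γ₂ - n / p)) *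
    (∑' j : {j : ℤ // j₀ ≤ j}, 2 ^ (((j : ℤ) : ℝ) * q * (γ₁ + n / 2 - n / p)) *
      levelSum n p a j₀ k₀ j ^ (q / p)) ^ (1 / q)

lemma besovM_eq_iSup_cubeTerm (n : ℕ) (p q γ₁ γ₂ : ℝ) (a : En n → ℤ → IVec n → ℂ) :
    besovM n p q γ₁ γ₂ a = ⨆ (j₀ : ℤ) (k₀ : IVec n), cubeTerm n p q γ₁ γ₂ a j₀ k₀ := by
  simp only [besovM, cubeTerm, levelSum, ← ENNReal.ofReal_rpow_of_pos (two_pos : (0 : ℝ) < 2),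
    ENNReal.ofReal_ofNat]

lemma cubeTerm_le (n : ℕ) (a : En n → ℤ → IVec n → ℂ) {p q p₁ q₁ : ℝ} (γ₁ γ₂ w : ℝ)
    (hp : 0 < p) (hq : 0 < q) (hp₁ : 1 ≤ p₁) (hq₁ : 0 < q₁) {G : ℝ≥0∞}
    (hG : ∀ (j₀ : ℤ) (b : {j : ℤ // j₀ ≤ j} → ℝ≥0∞),
      ∑' j : {j : ℤ // j₀ ≤ j}, (2 : ℝ≥0∞) ^ (-((j : ℤ) : ℝ) * (q / q₁ * w)) * b j ^ q₁⁻¹ ≤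
        G * (2 ^ (-(j₀ : ℝ) * (q / q₁ * w)) * (∑' j, b j) ^ q₁⁻¹))
    (j₀ : ℤ) (k₀ : IVec n) :
    cubeTerm n (p / p₁) (q / q₁) (γ₁ - w) γ₂ a j₀ k₀ ≤
      2 ^ ((n : ℝ) * (p₁ - 1) / p) * G ^ (q₁ / q) * cubeTerm n p q γ₁ (γ₂ + w) a j₀ k₀ := by
  set b : {j : ℤ // j₀ ≤ j} → ℝ≥0∞ := fun j =>
    2 ^ (((j : ℤ) : ℝ) * q * (γ₁ + n / 2 - n / p)) * levelSum n p a j₀ k₀ j ^ (q / p)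
  set B := ∑' j, b j
  set D : ℝ := (1 - j₀) * n * (p₁ - 1) * q / (p * q₁) with hD
  have hsum : ∑' j : {j : ℤ // j₀ ≤ j},
      2 ^ (((j : ℤ) : ℝ) * (q / q₁) * (γ₁ - w + n / 2 - n / (p / p₁))) *
        levelSum n (p / p₁) a j₀ k₀ j ^ ((q / q₁) / (p / p₁)) ≤
      2 ^ D * (G * (2 ^ (-(j₀ : ℝ) * (q / q₁ * w)) * B ^ q₁⁻¹)) :=
    calc _ ≤ ∑' j : {j : ℤ // j₀ ≤ j},
          2 ^ D * (2 ^ (-((j : ℤ) : ℝ) * (q / q₁ * w)) * b j ^ q₁⁻¹) :=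
          ENNReal.tsum_le_tsum fun j =>
            two_rpow_mul_levelSum_div_rpow_le n a γ₁ w hp hq hp₁ hq₁ k₀ j.2
      _ = 2 ^ D * ∑' j : {j : ℤ // j₀ ≤ j}, 2 ^ (-((j : ℤ) : ℝ) * (q / q₁ * w)) * b j ^ q₁⁻¹ :=
          ENNReal.tsum_mul_left
      _ ≤ _ := by gcongr; exact hG j₀ b
  have hexp : -(j₀ : ℝ) * (γ₂ - n / (p / p₁)) + D * (q₁ / q) + -(j₀ : ℝ) * (q / q₁ * w) * (q₁ / q) =
      n * (p₁ - 1) / p + -(j₀ : ℝ) * (γ₂ + w - n / p) := by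
    rw [hD]
    field_simp
    ring
  calc cubeTerm n (p / p₁) (q / q₁) (γ₁ - w) γ₂ a j₀ k₀
      ≤ 2 ^ (-(j₀ : ℝ) * (γ₂ - n / (p / p₁))) *
          (2 ^ D * (G * (2 ^ (-(j₀ : ℝ) * (q / q₁ * w)) * B ^ q₁⁻¹))) ^ (1 / (q / q₁)) := by
        unfold cubeTerm
        gcongr
    _ = 2 ^ (-(j₀ : ℝ) * (γ₂ - n / (p / p₁)) + D * (q₁ / q) +
          -(j₀ : ℝ) * (q / q₁ * w) * (q₁ / q)) * G ^ (q₁ / q) * B ^ (1 / q) := by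
        rw [one_div_div, ENNReal.mul_rpow_of_nonneg _ _ (by positivity),
          ENNReal.mul_rpow_of_nonneg _ _ (by positivity),
          ENNReal.mul_rpow_of_nonneg _ _ (by positivity), ← ENNReal.rpow_mul, ← ENNReal.rpow_mul,
          ← ENNReal.rpow_mul, ENNReal.two_rpow_add, ENNReal.two_rpow_add,
          show q₁⁻¹ * (q₁ / q) = 1 / q by field_simp]
        ring
    _ = _ := by
        rw [hexp, ENNReal.two_rpow_add]
        unfold cubeTerm
        ring

lemma besovM_le_mul_besovM {n : ℕ} {p q γ₁ γ₂ p' q' γ₁' γ₂' : ℝ} {a : En n → ℤ → IVec n → ℂ}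
    {K : ℝ≥0∞} (h : ∀ j₀ k₀, cubeTerm n p q γ₁ γ₂ a j₀ k₀ ≤ K * cubeTerm n p' q' γ₁' γ₂' a j₀ k₀) :
    besovM n p q γ₁ γ₂ a ≤ K * besovM n p' q' γ₁' γ₂' a := by
  rw [besovM_eq_iSup_cubeTerm, besovM_eq_iSup_cubeTerm]
  refine iSup₂_le fun j₀ k₀ => (h j₀ k₀).trans ?_
  gcongr
  exact le_iSup₂ (f := fun j₀ k₀ => cubeTerm n p' q' γ₁' γ₂' a j₀ k₀) j₀ k₀

theorem statement16_general (n : ℕ) (p q γ₁ γ₂ p₁ w q₁ : ℝ)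
    (hp1 : 1 < p) (hq1 : 1 < q) (hp₁ : 1 ≤ p₁)
    (hcase : (w = 0 ∧ q₁ = 1) ∨ (0 < w ∧ 1 ≤ q₁ ∧ q₁ ≤ q)) :
    ∃ C : ℝ, 0 < C ∧ ∀ a : En n → ℤ → IVec n → ℂ,
      besovM n (p / p₁) (q / q₁) (γ₁ - w) γ₂ a ≤
        ENNReal.ofReal C * besovM n p q γ₁ (γ₂ + w) a := by
  have hq₁ : 0 < q₁ := by rcases hcase with ⟨-, h⟩ | ⟨-, h, -⟩ <;> linarith
  obtain ⟨G, hG_top, hG⟩ :=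
      exists_tsum_two_rpow_neg_mul_mul_rpow_le (c := q / q₁ * w) (q := q₁) <| by
    rcases hcase with ⟨rfl, rfl⟩ | ⟨hw_pos, hq₁_ge, -⟩
    · simp
    · exact .inr ⟨by positivity, hq₁_ge⟩
  set K : ℝ≥0∞ := 2 ^ ((n : ℝ) * (p₁ - 1) / p) * G ^ (q₁ / q)
  have hK : K ≠ ⊤ :=
    ENNReal.mul_ne_top (by simp) (ENNReal.rpow_ne_top_of_nonneg (by positivity) hG_top)
  refine ⟨K.toReal + 1, by positivity, fun a => ?_⟩
  calc _ ≤ K * besovM n p q γ₁ (γ₂ + w) a := besovM_le_mul_besovM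
        (cubeTerm_le n a γ₁ γ₂ w (by linarith) (by linarith) hp₁ hq₁ hG)
    _ ≤ _ := by
      gcongr
      exact (ENNReal.le_ofReal_iff_toReal_le hK (by positivity)).2 (by linarith)

/-- the inclusion `Ḃ^{γ₁,γ₂+w}_{p,q} ⊆ Ḃ^{γ₁−w,γ₂}_{p/p₁,q/q₁}`
expressed on the wavelet-coefficient quantities `M`. -/
theorem statement16 (n : ℕ) (hn : 1 ≤ n) (p q γ₁ γ₂ p₁ w q₁ : ℝ)
    (hp1 : 1 < p) (hq1 : 1 < q) (hp₁ : 1 ≤ p₁) (hw : 0 ≤ w)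
    (hcase : (w = 0 ∧ q₁ = 1) ∨ (0 < w ∧ 1 ≤ q₁ ∧ q₁ ≤ q)) :
    ∃ C : ℝ, 0 < C ∧ ∀ a : En n → ℤ → IVec n → ℂ,
      besovM n (p / p₁) (q / q₁) (γ₁ - w) γ₂ a ≤
        ENNReal.ofReal C * besovM n p q γ₁ (γ₂ + w) a :=
  statement16_general n p q γ₁ γ₂ p₁ w q₁ hp1 hq1 hp₁ hcase
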